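/- Let k_z < K_r, K² = K_r² − k_z², and F smooth with F_ss + F_yy + K_r² F = 0. Then p = sinh(k_z z)·F(x−Vt,y) + (β(sin(Kz)M + cos(Kz) − 1)/K² − V)·y satisfies the Charney–Obukhov equation for any constant M. -/

import Mathlib

open Real

noncomputable section

/-- Partial derivative in `t` of `p t x y z`. -/
def pdt (p : ℝ → ℝ → ℝ → ℝ → ℝ) (t x y z : ℝ) : ℝ := deriv (fun t' => p t' x y z) t
/-- Partial derivative in `x`. -/
def pdx (p : ℝ → ℝ → ℝ → ℝ → ℝ) (t x y z : ℝ) : ℝ := deriv (fun x' => p t x' y z) x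
/-- Partial derivative in `y`. -/
def pdy (p : ℝ → ℝ → ℝ → ℝ → ℝ) (t x y z : ℝ) : ℝ := deriv (fun y' => p t x y' z) y
/-- Partial derivative in `z`. -/
def pdz (p : ℝ → ℝ → ℝ → ℝ → ℝ) (t x y z : ℝ) : ℝ := deriv (fun z' => p t x y z') z

/-- Spatial Laplacian in `(x, y, z)`. -/
def lap3d (p : ℝ → ℝ → ℝ → ℝ → ℝ) (t x y z : ℝ) : ℝ :=
  pdx (pdx p) t x y z + pdy (pdy p) t x y z + pdz (pdz p) t x y z

/-- Charney–Obukhov operator. -/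
def CO (β : ℝ) (p : ℝ → ℝ → ℝ → ℝ → ℝ) (t x y z : ℝ) : ℝ :=
  pdt (lap3d p) t x y z + pdx p t x y z * pdy (lap3d p) t x y z
    - pdy p t x y z * pdx (lap3d p) t x y z + β * pdx p t x y z

/-- Boundary condition operator `p_{zt} − p_y p_{zx} + p_x p_{zy}`. -/
def Bop (p : ℝ → ℝ → ℝ → ℝ → ℝ) (t x y z : ℝ) : ℝ :=
  pdt (pdz p) t x y z - pdy p t x y z * pdx (pdz p) t x y z
    + pdx p t x y z * pdy (pdz p) t x y z

/-- Partial derivative in the first variable `s` of a two-variable function. -/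
def dS (F : ℝ → ℝ → ℝ) (s y : ℝ) : ℝ := deriv (fun s' => F s' y) s
/-- Partial derivative in the second variable `y` of a two-variable function. -/
def dY (F : ℝ → ℝ → ℝ) (s y : ℝ) : ℝ := deriv (fun y' => F s y') y

/-- Smoothness of a two-variable function. -/
def Smooth2 (F : ℝ → ℝ → ℝ) : Prop := ContDiff ℝ (⊤ : ℕ∞) (fun q : ℝ × ℝ => F q.1 q.2)

lemma hdS {F : ℝ → ℝ → ℝ} (hF : Smooth2 F) (s y : ℝ) :
    HasDerivAt (fun s' => F s' y) (dS F s y) s := by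
  have h : DifferentiableAt ℝ (fun s' => F s' y) s := by
    have : (fun s' => F s' y) = (fun q : ℝ × ℝ => F q.1 q.2) ∘ (fun s' => ((s' : ℝ), y)) := rfl
    rw [this]
    exact (hF.differentiable (by simp) (s, y)).comp s
      ((differentiableAt_id.prodMk (differentiableAt_const y)))
  exact h.hasDerivAt

lemma hdY {F : ℝ → ℝ → ℝ} (hF : Smooth2 F) (s y : ℝ) :
    HasDerivAt (fun y' => F s y') (dY F s y) y := by
  have h : DifferentiableAt ℝ (fun y' => F s y') y := by
    have : (fun y' => F s y') = (fun q : ℝ × ℝ => F q.1 q.2) ∘ (fun y' => (s, (y' : ℝ))) := rfl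
    rw [this]
    exact (hF.differentiable (by simp) (s, y)).comp y
      ((differentiableAt_const s).prodMk differentiableAt_id)
  exact h.hasDerivAt

lemma smooth2_dS {F : ℝ → ℝ → ℝ} (hF : Smooth2 F) : Smooth2 (dS F) := by
  have key : ∀ s y : ℝ, dS F s y = fderiv ℝ (fun q : ℝ × ℝ => F q.1 q.2) (s, y) (1, 0) := by
    intro s y
    have h1 : HasFDerivAt (fun q : ℝ × ℝ => F q.1 q.2)
        (fderiv ℝ (fun q : ℝ × ℝ => F q.1 q.2) (s, y)) (s, y) :=
      (hF.differentiable (by simp) (s, y)).hasFDerivAt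
    have h2 : HasDerivAt (fun s' : ℝ => ((s' : ℝ), y)) ((1 : ℝ), (0 : ℝ)) s :=
      (hasDerivAt_id s).prodMk (hasDerivAt_const s y)
    have h3 : HasDerivAt (fun s' => F s' y)
        (fderiv ℝ (fun q : ℝ × ℝ => F q.1 q.2) (s, y) (1, 0)) s := h1.comp_hasDerivAt (f := fun s' : ℝ => ((s' : ℝ), y)) s h2
    rw [dS]; exact h3.deriv
  have : (fun q : ℝ × ℝ => dS F q.1 q.2)
      = fun q : ℝ × ℝ => fderiv ℝ (fun q : ℝ × ℝ => F q.1 q.2) q ((1 : ℝ), (0 : ℝ)) := by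
    funext q; exact key q.1 q.2
  rw [Smooth2, this]
  exact (hF.fderiv_right (by simp)).clm_apply contDiff_const

lemma smooth2_dY {F : ℝ → ℝ → ℝ} (hF : Smooth2 F) : Smooth2 (dY F) := by
  have key : ∀ s y : ℝ, dY F s y = fderiv ℝ (fun q : ℝ × ℝ => F q.1 q.2) (s, y) (0, 1) := by
    intro s y
    have h1 : HasFDerivAt (fun q : ℝ × ℝ => F q.1 q.2)
        (fderiv ℝ (fun q : ℝ × ℝ => F q.1 q.2) (s, y)) (s, y) :=
      (hF.differentiable (by simp) (s, y)).hasFDerivAt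
    have h2 : HasDerivAt (fun y' : ℝ => (s, (y' : ℝ))) ((0 : ℝ), (1 : ℝ)) y :=
      (hasDerivAt_const y s).prodMk (hasDerivAt_id y)
    have h3 : HasDerivAt (fun y' => F s y')
        (fderiv ℝ (fun q : ℝ × ℝ => F q.1 q.2) (s, y) (0, 1)) y := h1.comp_hasDerivAt (f := fun y' : ℝ => (s, (y' : ℝ))) y h2
    rw [dY]; exact h3.deriv
  have : (fun q : ℝ × ℝ => dY F q.1 q.2)
      = fun q : ℝ × ℝ => fderiv ℝ (fun q : ℝ × ℝ => F q.1 q.2) q ((0 : ℝ), (1 : ℝ)) := by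
    funext q; exact key q.1 q.2
  rw [Smooth2, this]
  exact (hF.fderiv_right (by simp)).clm_apply contDiff_const

/-- The candidate solution. -/
def Psol (F : ℝ → ℝ → ℝ) (kz K V β M : ℝ) : ℝ → ℝ → ℝ → ℝ → ℝ :=
  fun t x y z => Real.sinh (kz * z) * F (x - V * t) y
    + (β * (Real.sin (K * z) * M + Real.cos (K * z) - 1) / K ^ 2 - V) * y

/-- Closed form of the Laplacian of `Psol`. -/
def LL (F : ℝ → ℝ → ℝ) (kz K V β M : ℝ) : ℝ → ℝ → ℝ → ℝ → ℝ :=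
  fun t x y z => -(K ^ 2) * (Real.sinh (kz * z) * F (x - V * t) y)
    - β * (Real.sin (K * z) * M + Real.cos (K * z)) * y

variable {F : ℝ → ℝ → ℝ} {kz K V β M : ℝ}

lemma pdx_Psol (hF : Smooth2 F) :
    pdx (Psol F kz K V β M)
      = fun t x y z => Real.sinh (kz * z) * dS F (x - V * t) y := by
  funext t x y z
  have h1 : HasDerivAt (fun x' => F (x' - V * t) y) (dS F (x - V * t) y * 1) x :=
    (hdS hF (x - V * t) y).comp (h := fun x' => x' - V * t) x ((hasDerivAt_id x).sub_const (V * t))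
  have h2 : HasDerivAt (fun x' => Psol F kz K V β M t x' y z)
      (Real.sinh (kz * z) * (dS F (x - V * t) y * 1)) x :=
    (h1.const_mul (Real.sinh (kz * z))).add_const _
  rw [pdx, h2.deriv]; ring

lemma pdy_Psol (hF : Smooth2 F) :
    pdy (Psol F kz K V β M)
      = fun t x y z => Real.sinh (kz * z) * dY F (x - V * t) y
          + (β * (Real.sin (K * z) * M + Real.cos (K * z) - 1) / K ^ 2 - V) := by
  funext t x y z
  have h2 : HasDerivAt (fun y' => Psol F kz K V β M t x y' z)
      (Real.sinh (kz * z) * dY F (x - V * t) y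
        + (β * (Real.sin (K * z) * M + Real.cos (K * z) - 1) / K ^ 2 - V) * 1) y :=
    ((hdY hF (x - V * t) y).const_mul _).add ((hasDerivAt_id y).const_mul _)
  rw [pdy, h2.deriv]; ring

lemma pdz_Psol :
    pdz (Psol F kz K V β M)
      = fun t x y z => kz * Real.cosh (kz * z) * F (x - V * t) y
          + β * (Real.cos (K * z) * K * M - Real.sin (K * z) * K) / K ^ 2 * y := by
  funext t x y z
  have hsin : HasDerivAt (fun z' : ℝ => Real.sin (K * z')) (Real.cos (K * z) * (K * 1)) z :=
    ((hasDerivAt_id z).const_mul K).sin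
  have hcos : HasDerivAt (fun z' : ℝ => Real.cos (K * z')) (-Real.sin (K * z) * (K * 1)) z :=
    ((hasDerivAt_id z).const_mul K).cos
  have hsinh : HasDerivAt (fun z' : ℝ => Real.sinh (kz * z')) (Real.cosh (kz * z) * (kz * 1)) z :=
    ((hasDerivAt_id z).const_mul kz).sinh
  have h2 : HasDerivAt (fun z' => Psol F kz K V β M t x y z')
      (Real.cosh (kz * z) * (kz * 1) * F (x - V * t) y
        + β * (Real.cos (K * z) * (K * 1) * M + -Real.sin (K * z) * (K * 1)) / K ^ 2 * y) z :=
    (hsinh.mul_const _).add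
      (((((((hsin.mul_const M).add hcos).sub_const 1).const_mul β).div_const
        (K ^ 2)).sub_const V).mul_const y)
  rw [pdz, h2.deriv]; ring

lemma pdxx_Psol (hF : Smooth2 F) :
    pdx (pdx (Psol F kz K V β M))
      = fun t x y z => Real.sinh (kz * z) * dS (dS F) (x - V * t) y := by
  rw [pdx_Psol hF]
  funext t x y z
  have h1 : HasDerivAt (fun x' => dS F (x' - V * t) y) (dS (dS F) (x - V * t) y * 1) x :=
    (hdS (smooth2_dS hF) (x - V * t) y).comp x ((hasDerivAt_id x).sub_const (V * t))
  have h2 : HasDerivAt (fun x' => Real.sinh (kz * z) * dS F (x' - V * t) y)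
      (Real.sinh (kz * z) * (dS (dS F) (x - V * t) y * 1)) x :=
    h1.const_mul _
  rw [pdx, h2.deriv]; ring

lemma pdyy_Psol (hF : Smooth2 F) :
    pdy (pdy (Psol F kz K V β M))
      = fun t x y z => Real.sinh (kz * z) * dY (dY F) (x - V * t) y := by
  rw [pdy_Psol hF]
  funext t x y z
  have h2 : HasDerivAt (fun y' => Real.sinh (kz * z) * dY F (x - V * t) y'
        + (β * (Real.sin (K * z) * M + Real.cos (K * z) - 1) / K ^ 2 - V))
      (Real.sinh (kz * z) * dY (dY F) (x - V * t) y) y :=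
    ((hdY (smooth2_dY hF) (x - V * t) y).const_mul _).add_const _
  rw [pdy, h2.deriv]

lemma pdzz_Psol :
    pdz (pdz (Psol F kz K V β M))
      = fun t x y z => kz ^ 2 * Real.sinh (kz * z) * F (x - V * t) y
          + β * (-(Real.sin (K * z) * K * K * M) - Real.cos (K * z) * K * K) / K ^ 2 * y := by
  rw [pdz_Psol]
  funext t x y z
  have hsin : HasDerivAt (fun z' : ℝ => Real.sin (K * z')) (Real.cos (K * z) * (K * 1)) z :=
    ((hasDerivAt_id z).const_mul K).sin
  have hcos : HasDerivAt (fun z' : ℝ => Real.cos (K * z')) (-Real.sin (K * z) * (K * 1)) z :=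
    ((hasDerivAt_id z).const_mul K).cos
  have hcosh : HasDerivAt (fun z' : ℝ => Real.cosh (kz * z')) (Real.sinh (kz * z) * (kz * 1)) z :=
    ((hasDerivAt_id z).const_mul kz).cosh
  have h2 : HasDerivAt (fun z' => kz * Real.cosh (kz * z') * F (x - V * t) y
        + β * (Real.cos (K * z') * K * M - Real.sin (K * z') * K) / K ^ 2 * y)
      (kz * (Real.sinh (kz * z) * (kz * 1)) * F (x - V * t) y
        + β * ((-Real.sin (K * z) * (K * 1)) * K * M - Real.cos (K * z) * (K * 1) * K) / K ^ 2 * y)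
      z :=
    (((hcosh.const_mul kz).mul_const _).add
      (((((hcos.mul_const K).mul_const M).sub ((hsin.mul_const K))).const_mul β).div_const
        (K ^ 2) |>.mul_const y))
  rw [pdz, h2.deriv]; ring

lemma lap_Psol (hF : Smooth2 F) {Kr : ℝ} (hK : K ^ 2 = Kr ^ 2 - kz ^ 2) (hK0 : K ≠ 0)
    (hHelm : ∀ s y, dS (dS F) s y + dY (dY F) s y + Kr ^ 2 * F s y = 0) :
    lap3d (Psol F kz K V β M) = LL F kz K V β M := by
  funext t x y z
  simp only [lap3d, pdxx_Psol hF, pdyy_Psol hF, pdzz_Psol, LL]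
  have hH := hHelm (x - V * t) y
  field_simp
  linear_combination (Real.sinh (kz * z)) * hH
    + (Real.sinh (kz * z) * F (x - V * t) y) * hK

lemma pdt_LL (hF : Smooth2 F) :
    pdt (LL F kz K V β M)
      = fun t x y z => -(K ^ 2) * (Real.sinh (kz * z) * (dS F (x - V * t) y * (0 - V * 1))) := by
  funext t x y z
  have h1 : HasDerivAt (fun t' => F (x - V * t') y) (dS F (x - V * t) y * (0 - V * 1)) t :=
    (hdS hF (x - V * t) y).comp (h := fun t' => x - V * t') t ((hasDerivAt_const t x).sub ((hasDerivAt_id t).const_mul V))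
  have h2 : HasDerivAt (fun t' => LL F kz K V β M t' x y z)
      (-(K ^ 2) * (Real.sinh (kz * z) * (dS F (x - V * t) y * (0 - V * 1)))) t :=
    ((h1.const_mul (Real.sinh (kz * z))).const_mul (-(K ^ 2))).sub_const _
  rw [pdt, h2.deriv]

lemma pdx_LL (hF : Smooth2 F) :
    pdx (LL F kz K V β M)
      = fun t x y z => -(K ^ 2) * (Real.sinh (kz * z) * (dS F (x - V * t) y * 1)) := by
  funext t x y z
  have h1 : HasDerivAt (fun x' => F (x' - V * t) y) (dS F (x - V * t) y * 1) x :=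
    (hdS hF (x - V * t) y).comp (h := fun x' => x' - V * t) x ((hasDerivAt_id x).sub_const (V * t))
  have h2 : HasDerivAt (fun x' => LL F kz K V β M t x' y z)
      (-(K ^ 2) * (Real.sinh (kz * z) * (dS F (x - V * t) y * 1))) x :=
    ((h1.const_mul (Real.sinh (kz * z))).const_mul (-(K ^ 2))).sub_const _
  rw [pdx, h2.deriv]

lemma pdy_LL (hF : Smooth2 F) :
    pdy (LL F kz K V β M)
      = fun t x y z => -(K ^ 2) * (Real.sinh (kz * z) * dY F (x - V * t) y)
          - β * (Real.sin (K * z) * M + Real.cos (K * z)) := by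
  funext t x y z
  have h2 : HasDerivAt (fun y' => LL F kz K V β M t x y' z)
      (-(K ^ 2) * (Real.sinh (kz * z) * dY F (x - V * t) y)
        - β * (Real.sin (K * z) * M + Real.cos (K * z)) * 1) y :=
    (((hdY hF (x - V * t) y).const_mul (Real.sinh (kz * z))).const_mul (-(K ^ 2))).sub
      ((hasDerivAt_id y).const_mul _)
  rw [pdy, h2.deriv]; ring

/-- Solution 4 satisfies the Charney–Obukhov equation. -/
theorem stmt_7 (F : ℝ → ℝ → ℝ) (kz Kr K V β M : ℝ)
    (hkz : kz < Kr) (hK : K ^ 2 = Kr ^ 2 - kz ^ 2) (hK0 : K ≠ 0) (hF : Smooth2 F)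
    (hHelm : ∀ s y, dS (dS F) s y + dY (dY F) s y + Kr ^ 2 * F s y = 0) :
    ∀ t x y z, CO β
      (fun t x y z => Real.sinh (kz * z) * F (x - V * t) y
        + (β * (Real.sin (K * z) * M + Real.cos (K * z) - 1) / K ^ 2 - V) * y)
      t x y z = 0 := by
  intro t x y z
  show CO β (Psol F kz K V β M) t x y z = 0
  simp only [CO, lap_Psol hF hK hK0 hHelm, pdt_LL hF, pdx_LL hF, pdy_LL hF,
    pdx_Psol hF, pdy_Psol hF]
  field_simp
  ring
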